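/- Let S be an orthodox semigroup, a a nongroup element, b an inverse of a, ab = a²b². For nonnegative integers k, l, m, n with k + l ≥ 1 and m + n ≥ 1: bᵏaˡ R bᵐaⁿ if and only if k = m, and bᵏaˡ L bᵐaⁿ if and only if l = n (R, L are Green's relations on S). -/
import Mathlib


namespace PaperStmt

/-- `S` is a regular semigroup. -/
def RegularSgp (S : Type*) [Semigroup S] : Prop := ∀ x : S, ∃ y, x * y * x = x

/-- The idempotents of `S` form a subsemigroup. -/
def IdemClosed (S : Type*) [Semigroup S] : Prop :=
  ∀ e f : S, e * e = e → f * f = f → (e * f) * (e * f) = e * f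

/-- An orthodox semigroup: regular with idempotents closed under multiplication. -/
def Orthodox (S : Type*) [Semigroup S] : Prop := RegularSgp S ∧ IdemClosed S

/-- Green's R-relation in a monoid. -/
def GreenRM {M : Type*} [Monoid M] (x y : M) : Prop :=
  (∃ s, x = y * s) ∧ (∃ s, y = x * s)

/-- Green's L-relation in a monoid. -/
def GreenLM {M : Type*} [Monoid M] (x y : M) : Prop :=
  (∃ s, x = s * y) ∧ (∃ s, y = s * x)

/-- Green's R-relation on a semigroup, computed in S¹ = WithOne S. -/
def GreenR {S : Type*} [Semigroup S] (x y : S) : Prop :=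
  GreenRM (x : WithOne S) (y : WithOne S)

/-- Green's L-relation on a semigroup. -/
def GreenL {S : Type*} [Semigroup S] (x y : S) : Prop :=
  GreenLM (x : WithOne S) (y : WithOne S)

/-- Green's H-relation. -/
def GreenH {S : Type*} [Semigroup S] (x y : S) : Prop := GreenR x y ∧ GreenL x y

/-- Green's D-relation, D = L ∘ R. -/
def GreenD {S : Type*} [Semigroup S] (x y : S) : Prop :=
  ∃ z : S, GreenL x z ∧ GreenR z y

/-- `a` belongs to some subgroup of `S`. -/
def InSubgroup {S : Type*} [Semigroup S] (a : S) : Prop :=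
  ∃ G : Set S, a ∈ G ∧ (∀ x ∈ G, ∀ y ∈ G, x * y ∈ G) ∧
    ∃ e ∈ G, (∀ x ∈ G, e * x = x ∧ x * e = x) ∧ ∀ x ∈ G, ∃ y ∈ G, x * y = e ∧ y * x = e

/-- The H-class of `a` is a group with identity element `e`. -/
def HClassGroupWithId {S : Type*} [Semigroup S] (a e : S) : Prop :=
  GreenH e a ∧ e * e = e ∧ (∀ x, GreenH x a → e * x = x ∧ x * e = x) ∧
    ∀ x, GreenH x a → ∃ y, GreenH y a ∧ x * y = e ∧ y * x = e

section Aux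
variable {M : Type*} [Monoid M] {A B : M}

lemma I1 (h3 : ∀ x : M, A*(A*(B*(B*x))) = A*(B*x)) :
    ∀ (n : ℕ) (x : M), A^(n+1)*(B^(n+1)*x) = A*(B*x) := by
  intro n
  induction n with
  | zero => intro x; rw [pow_one, pow_one]
  | succ n ih =>
    intro x
    rw [pow_succ' A (n+1), pow_succ B (n+1), mul_assoc, mul_assoc, ih (B*x), h3]

lemma I2 (hA : ∀ x : M, A*(B*(A*x)) = A*x) :
    ∀ (n : ℕ) (x : M), A*(B*(A^(n+1)*x)) = A^(n+1)*x := by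
  intro n x
  rw [pow_succ' A n, mul_assoc, hA]

lemma I3 (hB : ∀ x : M, B*(A*(B*x)) = B*x) :
    ∀ (n : ℕ) (x : M), B^(n+1)*(A*(B*x)) = B^(n+1)*x := by
  intro n x
  rw [pow_succ B n, mul_assoc, hB, ← mul_assoc, ← pow_succ]

lemma I1' (h3 : ∀ x : M, A*(A*(B*(B*x))) = A*(B*x)) {n : ℕ} (hn : 1 ≤ n) (x : M) :
    A^n*(B^n*x) = A*(B*x) := by
  obtain ⟨n₀, rfl⟩ : ∃ n₀, n = n₀+1 := ⟨n-1, by omega⟩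
  exact I1 h3 n₀ x

lemma I2' (hA : ∀ x : M, A*(B*(A*x)) = A*x) {n : ℕ} (hn : 1 ≤ n) (x : M) :
    A*(B*(A^n*x)) = A^n*x := by
  obtain ⟨n₀, rfl⟩ : ∃ n₀, n = n₀+1 := ⟨n-1, by omega⟩
  exact I2 hA n₀ x

lemma I3' (hB : ∀ x : M, B*(A*(B*x)) = B*x) {n : ℕ} (hn : 1 ≤ n) (x : M) :
    B^n*(A*(B*x)) = B^n*x := by
  obtain ⟨n₀, rfl⟩ : ∃ n₀, n = n₀+1 := ⟨n-1, by omega⟩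
  exact I3 hB n₀ x

lemma I1o (h3 : ∀ x : M, A*(A*(B*(B*x))) = A*(B*x)) {n : ℕ} (hn : 1 ≤ n) :
    A^n*B^n = A*B := by
  have := I1' h3 hn (1:M); simpa using this

lemma I2o (hA : ∀ x : M, A*(B*(A*x)) = A*x) {n : ℕ} (hn : 1 ≤ n) :
    A*(B*A^n) = A^n := by
  have := I2' hA hn (1:M); simpa using this

lemma I3o (hB : ∀ x : M, B*(A*(B*x)) = B*x) {n : ℕ} (hn : 1 ≤ n) :
    B^n*(A*B) = B^n := by
  have := I3' hB hn (1:M); simpa using this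

lemma W (hA : ∀ x : M, A*(B*(A*x)) = A*x) (hB : ∀ x : M, B*(A*(B*x)) = B*x)
    (h3 : ∀ x : M, A*(A*(B*(B*x))) = A*(B*x))
    (k l n : ℕ) (hkl : 1 ≤ k + l) : B^k*(A^n*(B^n*A^l)) = B^k*A^l := by
  rcases Nat.eq_zero_or_pos n with rfl | hn
  · simp
  · rw [I1' h3 hn (A^l)]
    rcases Nat.eq_zero_or_pos l with rfl | hl
    · have hk : 1 ≤ k := by omega
      simp only [pow_zero, mul_one]
      exact I3o hB hk
    · rw [I2o hA hl]

lemma GreenRM_symm {x y : M} (h : GreenRM x y) : GreenRM y x := ⟨h.2, h.1⟩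

lemma GreenRM_trans {x y z : M} (h : GreenRM x y) (h' : GreenRM y z) : GreenRM x z := by
  obtain ⟨⟨s, hs⟩, ⟨t, ht⟩⟩ := h; obtain ⟨⟨s', hs'⟩, ⟨t', ht'⟩⟩ := h'
  exact ⟨⟨s'*s, by rw [hs, hs', mul_assoc]⟩, ⟨t*t', by rw [ht', ht, mul_assoc]⟩⟩

lemma GreenLM_symm {x y : M} (h : GreenLM x y) : GreenLM y x := ⟨h.2, h.1⟩

lemma GreenLM_trans {x y z : M} (h : GreenLM x y) (h' : GreenLM y z) : GreenLM x z := by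
  obtain ⟨⟨s, hs⟩, ⟨t, ht⟩⟩ := h; obtain ⟨⟨s', hs'⟩, ⟨t', ht'⟩⟩ := h'
  exact ⟨⟨s*s', by rw [hs, hs', mul_assoc]⟩, ⟨t'*t, by rw [ht', ht, mul_assoc]⟩⟩

lemma easyR (hA : ∀ x : M, A*(B*(A*x)) = A*x) (hB : ∀ x : M, B*(A*(B*x)) = B*x)
    (h3 : ∀ x : M, A*(A*(B*(B*x))) = A*(B*x))
    (k l n : ℕ) (hkl : 1 ≤ k+l) (hkn : 1 ≤ k+n) : GreenRM (B^k*A^l) (B^k*A^n) :=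
  ⟨⟨B^n*A^l, by rw [mul_assoc, W hA hB h3 k l n hkl]⟩,
   ⟨B^l*A^n, by rw [mul_assoc, W hA hB h3 k n l hkn]⟩⟩

lemma easyL (hA : ∀ x : M, A*(B*(A*x)) = A*x) (hB : ∀ x : M, B*(A*(B*x)) = B*x)
    (h3 : ∀ x : M, A*(A*(B*(B*x))) = A*(B*x))
    (k l m : ℕ) (hkl : 1 ≤ k+l) (hml : 1 ≤ m+l) : GreenLM (B^k*A^l) (B^m*A^l) :=
  ⟨⟨B^k*A^m, by rw [mul_assoc, W hA hB h3 k l m hkl]⟩,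
   ⟨B^m*A^k, by rw [mul_assoc, W hA hB h3 m l k hml]⟩⟩

lemma collapseR (hA : ∀ x : M, A*(B*(A*x)) = A*x) (hB : ∀ x : M, B*(A*(B*x)) = B*x)
    (h3 : ∀ x : M, A*(A*(B*(B*x))) = A*(B*x))
    {k l m n : ℕ} (hkl : 1 ≤ k + l) (hmn : 1 ≤ m + n) (hlt : k < m)
    (h : GreenRM (B^k*A^l) (B^m*A^n)) :
    ∃ p : ℕ, A*(B*(B^(p+1)*(A^(p+1)*(A*B)))) = A*B := by
  have h1 : GreenRM (B^k*A^1) (B^m*A^1) :=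
    GreenRM_trans (GreenRM_trans (easyR hA hB h3 k 1 l (by omega) hkl) h)
      (easyR hA hB h3 m n 1 hmn (by omega))
  obtain ⟨⟨s, hs⟩, -⟩ := h1
  rw [pow_one, mul_assoc] at hs
  rcases Nat.eq_zero_or_pos k with rfl | hk
  · -- k = 0
    rw [pow_zero, one_mul] at hs
    obtain ⟨p, rfl⟩ : ∃ p, m = p+1 := ⟨m-1, by omega⟩
    refine ⟨p, ?_⟩
    have hsB : A*B = B^(p+1)*(A*(s*B)) := by
      have h' := congrArg (·*B) hs
      simpa only [mul_assoc] using h'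
    have inner : B^(p+1)*(A^(p+1)*(A*B)) = A*B := by
      calc B^(p+1)*(A^(p+1)*(A*B))
          = B^(p+1)*(A^(p+1)*(B^(p+1)*(A*(s*B)))) := by rw [hsB]
        _ = B^(p+1)*(A*(B*(A*(s*B)))) := by rw [I1 h3 p (A*(s*B))]
        _ = B^(p+1)*(A*(s*B)) := by rw [hA (s*B)]
        _ = A*B := hsB.symm
    calc A*(B*(B^(p+1)*(A^(p+1)*(A*B)))) = A*(B*(A*B)) := by rw [inner]
      _ = A*B := hA B
  · -- k ≥ 1
    obtain ⟨p, hm⟩ : ∃ p, m = k+(p+1) := ⟨m-k-1, by omega⟩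
    refine ⟨p, ?_⟩
    have hBm : (B:M)^m = B^k*B^(p+1) := by rw [hm, pow_add]
    have hAm : (A:M)^m = A^(p+1)*A^k := by
      rw [hm, ← pow_add]; congr 1; omega
    have hmpos : 1 ≤ m := by omega
    have split : (B^k*A)*(B*A^k) = B^k*A^k := by
      obtain ⟨k₀, rfl⟩ : ∃ k₀, k = k₀+1 := ⟨k-1, by omega⟩
      rw [mul_assoc, pow_succ' A k₀, hA (A^k₀)]
    have fhyp : B^m*(A^m*(B^k*A^k)) = B^k*A^k := by
      calc B^m*(A^m*(B^k*A^k))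
          = B^m*(A^m*((B^m*(A*s))*(B*A^k))) := by rw [← split, hs]
        _ = B^m*(A^m*(B^m*((A*s)*(B*A^k)))) := by rw [mul_assoc (B^m) (A*s) (B*A^k)]
        _ = B^m*(A*(B*((A*s)*(B*A^k)))) := by rw [I1' h3 hmpos ((A*s)*(B*A^k))]
        _ = B^m*(A*(B*(A*(s*(B*A^k))))) := by rw [mul_assoc A s (B*A^k)]
        _ = B^m*(A*(s*(B*A^k))) := by rw [hA (s*(B*A^k))]
        _ = B^m*((A*s)*(B*A^k)) := by rw [← mul_assoc A s]
        _ = (B^m*(A*s))*(B*A^k) := by rw [← mul_assoc]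
        _ = (B^k*A)*(B*A^k) := by rw [← hs]
        _ = B^k*A^k := split
    have ffauto : B^m*(A^m*(B^k*A^k)) = B^m*A^m := by
      calc B^m*(A^m*(B^k*A^k))
          = B^m*(A^(p+1)*(A^k*(B^k*A^k))) := by rw [hAm, mul_assoc]
        _ = B^m*(A^(p+1)*(A*(B*A^k))) := by rw [I1' h3 hk (A^k)]
        _ = B^m*(A^(p+1)*A^k) := by rw [I2o hA hk]
        _ = B^m*A^m := by rw [← hAm]
    have feq : B^k*A^k = B^m*A^m := fhyp.symm.trans ffauto
    have e1 : A^k*(B^k*(A^k*B^k)) = A*B := by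
      rw [I1' h3 hk (A^k*B^k), I2' hA hk (B^k), I1o h3 hk]
    calc A*(B*(B^(p+1)*(A^(p+1)*(A*B))))
        = A*(B*(B^(p+1)*(A^(p+1)*(A^k*B^k)))) := by rw [← I1o h3 hk]
      _ = A^k*(B^k*(B^(p+1)*(A^(p+1)*(A^k*B^k)))) := by
          rw [← I1' h3 hk (B^(p+1)*(A^(p+1)*(A^k*B^k)))]
      _ = A^k*(B^m*(A^m*B^k)) := by
          rw [hBm, hAm]; simp only [mul_assoc]
      _ = A^k*(B^k*(A^k*B^k)) := by
          rw [show (B:M)^m*(A^m*B^k) = B^k*(A^k*B^k) from by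
            rw [← mul_assoc, ← feq, mul_assoc]]
      _ = A*B := e1

lemma collapseL (hA : ∀ x : M, A*(B*(A*x)) = A*x) (hB : ∀ x : M, B*(A*(B*x)) = B*x)
    (h3 : ∀ x : M, A*(A*(B*(B*x))) = A*(B*x))
    {k l m n : ℕ} (hkl : 1 ≤ k + l) (hmn : 1 ≤ m + n) (hlt : l < n)
    (h : GreenLM (B^k*A^l) (B^m*A^n)) :
    ∃ p : ℕ, A*(B*(B^(p+1)*(A^(p+1)*(A*B)))) = A*B := by
  have h1 : GreenLM (B^1*A^l) (B^1*A^n) :=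
    GreenLM_trans (GreenLM_trans (GreenLM_symm (easyL hA hB h3 k l 1 hkl (by omega))) h)
      (easyL hA hB h3 m n 1 hmn (by omega))
  obtain ⟨⟨s, hs⟩, -⟩ := h1
  rw [pow_one] at hs
  rcases Nat.eq_zero_or_pos l with rfl | hl
  · -- l = 0
    rw [pow_zero, mul_one] at hs
    obtain ⟨p, rfl⟩ : ∃ p, n = p+1 := ⟨n-1, by omega⟩
    refine ⟨p, ?_⟩
    have h0 := congrArg (fun z => A*(z*(B^(p+1)*A^(p+1)))) hs
    simp only [mul_assoc] at h0
    have h1' := congrArg (fun z => A*z) hs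
    have hEf : (A*B)*(B^(p+1)*A^(p+1)) = A*B := by
      calc (A*B)*(B^(p+1)*A^(p+1))
          = A*(B*(B^(p+1)*A^(p+1))) := by rw [mul_assoc]
        _ = A*(s*(B*(A^(p+1)*(B^(p+1)*A^(p+1))))) := h0
        _ = A*(s*(B*(A*(B*A^(p+1))))) := by rw [I1 h3 p (A^(p+1))]
        _ = A*(s*(B*A^(p+1))) := by rw [hB (A^(p+1))]
        _ = A*B := h1'.symm
    calc A*(B*(B^(p+1)*(A^(p+1)*(A*B))))
        = ((A*B)*(B^(p+1)*A^(p+1)))*(A*B) := by simp only [mul_assoc]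
      _ = (A*B)*(A*B) := by rw [hEf]
      _ = A*B := by rw [mul_assoc]; exact hA B
  · -- l ≥ 1
    obtain ⟨p, hn'⟩ : ∃ p, n = l+(p+1) := ⟨n-l-1, by omega⟩
    refine ⟨p, ?_⟩
    have hnpos : 1 ≤ n := by omega
    have hBn : (B:M)^n = B^l*B^(p+1) := by rw [hn', pow_add]
    have hAn : (A:M)^n = A^(p+1)*A^l := by rw [hn', ← pow_add]; congr 1; omega
    have fhyp : B^l*(A^l*(B^n*A^n)) = B^l*A^l := by
      obtain ⟨l₀, rfl⟩ : ∃ l₀, l = l₀+1 := ⟨l-1, by omega⟩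
      calc B^(l₀+1)*(A^(l₀+1)*(B^n*A^n))
          = B^l₀*((B*A^(l₀+1))*(B^n*A^n)) := by
            rw [pow_succ B l₀]; simp only [mul_assoc]
        _ = B^l₀*((s*(B*A^n))*(B^n*A^n)) := by rw [hs]
        _ = B^l₀*(s*(B*(A^n*(B^n*A^n)))) := by simp only [mul_assoc]
        _ = B^l₀*(s*(B*(A*(B*A^n)))) := by rw [I1' h3 hnpos (A^n)]
        _ = B^l₀*(s*(B*A^n)) := by rw [hB (A^n)]
        _ = B^l₀*(B*A^(l₀+1)) := by rw [← hs]
        _ = B^(l₀+1)*A^(l₀+1) := by rw [pow_succ B l₀]; simp only [mul_assoc]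
    have h2 := congrArg (fun z => A^l*z) fhyp
    rw [I1' h3 hl (A^l*(B^n*A^n)), I1' h3 hl (A^l)] at h2
    rw [hBn, hAn] at h2
    simp only [mul_assoc] at h2
    rw [I2' hA hl (B^l*(B^(p+1)*(A^(p+1)*A^l)))] at h2
    rw [I1' h3 hl (B^(p+1)*(A^(p+1)*A^l))] at h2
    rw [I2o hA hl] at h2
    calc A*(B*(B^(p+1)*(A^(p+1)*(A*B))))
        = A*(B*(B^(p+1)*(A^(p+1)*(A^l*B^l)))) := by rw [← I1o h3 hl]
      _ = (A*(B*(B^(p+1)*(A^(p+1)*A^l))))*B^l := by simp only [mul_assoc]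
      _ = A^l*B^l := by rw [h2]
      _ = A*B := I1o h3 hl

lemma keyM (hA : ∀ x : M, A*(B*(A*x)) = A*x)
    (h3 : ∀ x : M, A*(A*(B*(B*x))) = A*(B*x)) (p : ℕ)
    (hyp : A*(B*(B^(p+1)*(A^(p+1)*(A*B)))) = A*B) :
    ∃ u c : M, u = A*(B*(B^(p+1)*A^(p+1))) ∧
      c = u*((A*(B*(B^(p+1)*A^p)))*u) ∧
      u*u = u ∧ u*A = A ∧ A*u = A ∧ A*c = u ∧ c*A = u ∧ u*c = c ∧ c*u = c := by
  have hABA : A*(B*A) = A := by simpa using hA 1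
  have hI2o : A*(B*A^(p+1)) = A^(p+1) := by simpa using I2 hA p 1
  set u : M := A*(B*(B^(p+1)*A^(p+1))) with hu
  set t : M := A*(B*(B^(p+1)*A^p)) with ht
  set c : M := u*(t*u) with hc
  have huE : u*(A*B) = A*B := by
    rw [hu]; simpa only [mul_assoc] using hyp
  have huA : u*A = A := by
    have h' := congrArg (·*A) huE
    simp only [mul_assoc] at h'
    rwa [hABA] at h'
  have huu : u*u = u := by
    nth_rewrite 2 [hu]
    rw [← mul_assoc, huA, ← hu]
  have hstar : A = A*(B*(B^(p+1)*A^(p+1+1))) := by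
    have h' := huA.symm
    rw [hu] at h'
    simp only [mul_assoc] at h'
    rwa [← pow_succ] at h'
  have hApu : A^(p+1+1)*u = A^(p+1+1) := by
    rw [hu, ← mul_assoc, ← pow_succ]
    rw [show B*(B^(p+1)*A^(p+1)) = B^(p+1+1)*A^(p+1) from by rw [← mul_assoc, ← pow_succ']]
    rw [pow_succ' A (p+1+1), mul_assoc, I1 h3 (p+1) (A^(p+1))]
    rw [pow_succ' A p, hA (A^p), ← pow_succ', ← pow_succ']
  have hAu : A*u = A := by
    have h' := congrArg (·*u) hstar
    simp only [mul_assoc] at h'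
    rw [hApu] at h'
    rwa [← hstar] at h'
  have htA : t*A = u := by
    rw [ht, hu]
    simp only [mul_assoc]
    rw [← pow_succ]
  have hcA : c*A = u := by
    rw [hc]; simp only [mul_assoc]; rw [huA, htA, huu]
  have huc : u*c = c := by rw [hc, ← mul_assoc, huu]
  have hcu : c*u = c := by
    rw [hc]; simp only [mul_assoc]; rw [huu]
  have hApt : A^(p+1+1)*t = A*(A*(B*A^p)) := by
    rw [ht, ← mul_assoc, ← pow_succ]
    rw [show B*(B^(p+1)*A^p) = B^(p+1+1)*A^p from by rw [← mul_assoc, ← pow_succ']]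
    rw [pow_succ' A (p+1+1), mul_assoc, I1 h3 (p+1) (A^p)]
  have hAt : A*t = A*(B*(B^(p+1)*(A*(A*(B*A^p))))) := by
    have h' := congrArg (·*t) hstar
    simp only [mul_assoc] at h'
    rwa [hApt] at h'
  have hApu2 : A^p*u = A*(B*(B*A^(p+1))) := by
    rw [hu, ← mul_assoc, ← pow_succ]
    rw [show B*(B^(p+1)*A^(p+1)) = B^(p+1)*(B*A^(p+1)) from by
      rw [← mul_assoc, ← pow_succ', pow_succ, mul_assoc]]
    rw [I1 h3 p (B*A^(p+1))]
  have hAc : A*c = u := by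
    rw [hc, ← mul_assoc, hAu, ← mul_assoc, hAt]
    simp only [mul_assoc]
    rw [hApu2]
    rw [hA (B*(B*A^(p+1)))]
    rw [h3 (A^(p+1))]
    rw [hI2o]
  exact ⟨u, c, hu, hc, huu, huA, hAu, hAc, hcA, huc, hcu⟩

end Aux

section Build
variable {S : Type*} [Semigroup S]

lemma coe_mul' (x y : WithOne S) (hx : ∃ s : S, x = ↑s) (hy : ∃ s : S, y = ↑s) :
    ∃ s : S, x*y = ↑s := by
  obtain ⟨x', rfl⟩ := hx; obtain ⟨y', rfl⟩ := hy
  exact ⟨x'*y', (WithOne.coe_mul x' y').symm⟩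

lemma coe_pow (x : WithOne S) (hx : ∃ s : S, x = ↑s) (i : ℕ) :
    ∃ s : S, x^(i+1) = ↑s := by
  induction i with
  | zero => simpa using hx
  | succ i ih => rw [pow_succ]; exact coe_mul' _ _ ih hx

lemma coe_pow_mul (t : S) (i : ℕ) (x : WithOne S) (hx : ∃ s : S, x = ↑s) :
    ∃ s : S, (↑t : WithOne S)^i * x = ↑s := by
  induction i generalizing x with
  | zero => simpa using hx
  | succ i ih =>
    rw [pow_succ', mul_assoc]
    exact coe_mul' _ _ ⟨t, rfl⟩ (ih x hx)

lemma buildSubgroup {a : S} (u c : WithOne S)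
    (hucoe : ∃ s : S, u = ↑s) (hccoe : ∃ s : S, c = ↑s)
    (huu : u*u = u) (huA : u*↑a = ↑a) (hAu : ↑a*u = ↑a)
    (hAc : ↑a*c = u) (hcA : c*↑a = u) (huc : u*c = c) (hcu : c*u = c) :
    InSubgroup a := by
  set A : WithOne S := ↑a with hA
  set P : WithOne S → Prop := fun x => x = u ∨ ∃ i : ℕ, x = A^(i+1) ∨ x = c^(i+1) with hP
  have hPA : P A := Or.inr ⟨0, Or.inl (pow_one A).symm⟩
  have idl : ∀ x, P x → u*x = x := by
    rintro x (hx | ⟨i, rfl | rfl⟩)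
    · rw [hx]; exact huu
    · rw [pow_succ' A i, ← mul_assoc, huA]
    · rw [pow_succ' c i, ← mul_assoc, huc]
  have idr : ∀ x, P x → x*u = x := by
    rintro x (hx | ⟨i, rfl | rfl⟩)
    · rw [hx]; exact huu
    · rw [pow_succ A i, mul_assoc, hAu]
    · rw [pow_succ c i, mul_assoc, hcu]
  have invAC : ∀ i, A^(i+1)*c^(i+1) = u := by
    intro i
    induction i with
    | zero => simpa using hAc
    | succ i ih =>
      rw [pow_succ A (i+1), pow_succ' c (i+1), mul_assoc, ← mul_assoc A c (c^(i+1)), hAc,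
        idl _ (Or.inr ⟨i, Or.inr rfl⟩)]
      exact ih
  have invCA : ∀ i, c^(i+1)*A^(i+1) = u := by
    intro i
    induction i with
    | zero => simpa using hcA
    | succ i ih =>
      rw [pow_succ c (i+1), pow_succ' A (i+1), mul_assoc, ← mul_assoc c A (A^(i+1)), hcA,
        idl _ (Or.inr ⟨i, Or.inl rfl⟩)]
      exact ih
  have memAC : ∀ i j, P (A^(i+1)*c^(j+1)) := by
    intro i
    induction i with
    | zero =>
      intro j
      cases j with
      | zero =>
        left; simpa using hAc
      | succ j =>
        have he : A^(0+1)*c^(j+1+1) = c^(j+1) := by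
          rw [pow_one, pow_succ' c (j+1), ← mul_assoc, hAc]
          exact idl _ (Or.inr ⟨j, Or.inr rfl⟩)
        rw [he]; exact Or.inr ⟨j, Or.inr rfl⟩
    | succ i ih =>
      intro j
      cases j with
      | zero =>
        have he : A^(i+1+1)*c^(0+1) = A^(i+1) := by
          rw [pow_one, pow_succ A (i+1), mul_assoc, hAc]
          exact idr _ (Or.inr ⟨i, Or.inl rfl⟩)
        rw [he]; exact Or.inr ⟨i, Or.inl rfl⟩
      | succ j =>
        have he : A^(i+1+1)*c^(j+1+1) = A^(i+1)*c^(j+1) := by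
          rw [pow_succ A (i+1), pow_succ' c (j+1), mul_assoc, ← mul_assoc A c (c^(j+1)), hAc,
            idl _ (Or.inr ⟨j, Or.inr rfl⟩)]
        rw [he]; exact ih j
  have memCA : ∀ i j, P (c^(i+1)*A^(j+1)) := by
    intro i
    induction i with
    | zero =>
      intro j
      cases j with
      | zero =>
        left; simpa using hcA
      | succ j =>
        have he : c^(0+1)*A^(j+1+1) = A^(j+1) := by
          rw [pow_one, pow_succ' A (j+1), ← mul_assoc, hcA]
          exact idl _ (Or.inr ⟨j, Or.inl rfl⟩)
        rw [he]; exact Or.inr ⟨j, Or.inl rfl⟩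
    | succ i ih =>
      intro j
      cases j with
      | zero =>
        have he : c^(i+1+1)*A^(0+1) = c^(i+1) := by
          rw [pow_one, pow_succ c (i+1), mul_assoc, hcA]
          exact idr _ (Or.inr ⟨i, Or.inr rfl⟩)
        rw [he]; exact Or.inr ⟨i, Or.inr rfl⟩
      | succ j =>
        have he : c^(i+1+1)*A^(j+1+1) = c^(i+1)*A^(j+1) := by
          rw [pow_succ c (i+1), pow_succ' A (j+1), mul_assoc, ← mul_assoc c A (A^(j+1)), hcA,
            idl _ (Or.inr ⟨j, Or.inl rfl⟩)]
        rw [he]; exact ih j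
  have hmul : ∀ x y, P x → P y → P (x*y) := by
    rintro x y (hx | ⟨i, rfl | rfl⟩) hy
    · rw [hx, idl y hy]; exact hy
    · rcases hy with hy | ⟨j, rfl | rfl⟩
      · rw [hy, idr _ (Or.inr ⟨i, Or.inl rfl⟩)]; exact Or.inr ⟨i, Or.inl rfl⟩
      · have he : A^(i+1)*A^(j+1) = A^(i+j+1+1) := by rw [← pow_add]; congr 1; omega
        rw [he]; exact Or.inr ⟨i+j+1, Or.inl rfl⟩
      · exact memAC i j
    · rcases hy with hy | ⟨j, rfl | rfl⟩
      · rw [hy, idr _ (Or.inr ⟨i, Or.inr rfl⟩)]; exact Or.inr ⟨i, Or.inr rfl⟩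
      · exact memCA i j
      · have he : c^(i+1)*c^(j+1) = c^(i+j+1+1) := by rw [← pow_add]; congr 1; omega
        rw [he]; exact Or.inr ⟨i+j+1, Or.inr rfl⟩
  have hinv : ∀ x, P x → ∃ y, P y ∧ x*y = u ∧ y*x = u := by
    rintro x (hx | ⟨i, rfl | rfl⟩)
    · exact ⟨u, Or.inl rfl, by rw [hx, huu], by rw [hx, huu]⟩
    · exact ⟨c^(i+1), Or.inr ⟨i, Or.inr rfl⟩, invAC i, invCA i⟩
    · exact ⟨A^(i+1), Or.inr ⟨i, Or.inl rfl⟩, invCA i, invAC i⟩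
  have hPcoe : ∀ x, P x → ∃ s : S, x = ↑s := by
    rintro x (hx | ⟨i, rfl | rfl⟩)
    · rw [hx]; exact hucoe
    · exact coe_pow A ⟨a, rfl⟩ i
    · exact coe_pow c hccoe i
  obtain ⟨uS, huS⟩ := hucoe
  refine ⟨{s : S | P ↑s}, hPA, ?_, uS, ?_, ?_, ?_⟩
  · intro x hx y hy
    show P ↑(x*y)
    rw [WithOne.coe_mul]
    exact hmul _ _ hx hy
  · show P ↑uS
    rw [← huS]; exact Or.inl rfl
  · intro x hx
    constructor
    · have hh : (↑(uS*x) : WithOne S) = ↑x := by rw [WithOne.coe_mul, ← huS]; exact idl _ hx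
      exact_mod_cast hh
    · have hh : (↑(x*uS) : WithOne S) = ↑x := by rw [WithOne.coe_mul, ← huS]; exact idr _ hx
      exact_mod_cast hh
  · intro x hx
    obtain ⟨y, hy, hxy, hyx⟩ := hinv ↑x hx
    obtain ⟨yS, rfl⟩ := hPcoe y hy
    refine ⟨yS, hy, ?_, ?_⟩
    · have hh : (↑(x*yS) : WithOne S) = ↑uS := by rw [WithOne.coe_mul, ← huS]; exact hxy
      exact_mod_cast hh
    · have hh : (↑(yS*x) : WithOne S) = ↑uS := by rw [WithOne.coe_mul, ← huS]; exact hyx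
      exact_mod_cast hh

end Build

theorem stmt9 {S : Type*} [Semigroup S] (hO : Orthodox S) (a b : S)
    (h1 : a * b * a = a) (h2 : b * a * b = b)
    (h3 : a * b = a * a * (b * b)) (hng : ¬ InSubgroup a) :
    ∀ k l m n : ℕ, 1 ≤ k + l → 1 ≤ m + n →
      (GreenRM ((b : WithOne S) ^ k * (a : WithOne S) ^ l)
               ((b : WithOne S) ^ m * (a : WithOne S) ^ n) ↔ k = m) ∧
      (GreenLM ((b : WithOne S) ^ k * (a : WithOne S) ^ l)
               ((b : WithOne S) ^ m * (a : WithOne S) ^ n) ↔ l = n) := by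
  intro k l m n hkl hmn
  have baseA : (↑a*↑b*↑a : WithOne S) = ↑a := by
    rw [← WithOne.coe_mul, ← WithOne.coe_mul, h1]
  have baseB : (↑b*↑a*↑b : WithOne S) = ↑b := by
    rw [← WithOne.coe_mul, ← WithOne.coe_mul, h2]
  have base3 : (↑a*↑b : WithOne S) = ↑a*↑a*(↑b*↑b) := by
    rw [← WithOne.coe_mul, ← WithOne.coe_mul, ← WithOne.coe_mul, ← WithOne.coe_mul, h3]
  have hA' : ∀ x : WithOne S, ↑a*(↑b*(↑a*x)) = ↑a*x := by
    intro x
    calc (↑a:WithOne S)*(↑b*(↑a*x)) = (↑a*↑b*↑a)*x := by simp only [mul_assoc]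
      _ = ↑a*x := by rw [baseA]
  have hB' : ∀ x : WithOne S, ↑b*(↑a*(↑b*x)) = ↑b*x := by
    intro x
    calc (↑b:WithOne S)*(↑a*(↑b*x)) = (↑b*↑a*↑b)*x := by simp only [mul_assoc]
      _ = ↑b*x := by rw [baseB]
  have h3' : ∀ x : WithOne S, ↑a*(↑a*(↑b*(↑b*x))) = ↑a*(↑b*x) := by
    intro x
    calc (↑a:WithOne S)*(↑a*(↑b*(↑b*x))) = (↑a*↑a*(↑b*↑b))*x := by simp only [mul_assoc]
      _ = (↑a*↑b)*x := by rw [← base3]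
      _ = ↑a*(↑b*x) := by rw [mul_assoc]
  have contra : ∀ p : ℕ,
      (↑a:WithOne S)*(↑b*((↑b:WithOne S)^(p+1)*((↑a:WithOne S)^(p+1)*(↑a*↑b)))) = ↑a*↑b →
      False := by
    intro p hp
    obtain ⟨u, c, hu, hc, huu, huA, hAu, hAc, hcA, huc, hcu⟩ := keyM hA' h3' p hp
    have hucoe : ∃ s : S, u = ↑s := by
      rw [hu]
      exact coe_mul' _ _ ⟨a, rfl⟩ (coe_mul' _ _ ⟨b, rfl⟩
        (coe_mul' _ _ (coe_pow _ ⟨b, rfl⟩ p) (coe_pow _ ⟨a, rfl⟩ p)))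
    have htu : ∃ s : S, ((↑a:WithOne S)*(↑b*((↑b:WithOne S)^(p+1)*(↑a:WithOne S)^p)))*u = ↑s := by
      have hre : ((↑a:WithOne S)*(↑b*((↑b:WithOne S)^(p+1)*(↑a:WithOne S)^p)))*u
          = (↑a:WithOne S)*(↑b*((↑b:WithOne S)^(p+1)*((↑a:WithOne S)^p*u))) := by
        simp only [mul_assoc]
      rw [hre]
      exact coe_mul' _ _ ⟨a, rfl⟩ (coe_mul' _ _ ⟨b, rfl⟩
        (coe_mul' _ _ (coe_pow _ ⟨b, rfl⟩ p) (coe_pow_mul a p u hucoe)))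
    have hccoe : ∃ s : S, c = ↑s := by
      rw [hc]
      exact coe_mul' _ _ hucoe htu
    exact hng (buildSubgroup u c hucoe hccoe huu huA hAu hAc hcA huc hcu)
  constructor
  · constructor
    · intro hR
      by_contra hne
      rcases Nat.lt_or_ge k m with hlt | hge
      · obtain ⟨p, hp⟩ := collapseR hA' hB' h3' hkl hmn hlt hR
        exact contra p hp
      · have hlt : m < k := by omega
        obtain ⟨p, hp⟩ := collapseR hA' hB' h3' hmn hkl hlt (GreenRM_symm hR)
        exact contra p hp
    · rintro rfl
      exact easyR hA' hB' h3' k l n hkl hmn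
  · constructor
    · intro hL
      by_contra hne
      rcases Nat.lt_or_ge l n with hlt | hge
      · obtain ⟨p, hp⟩ := collapseL hA' hB' h3' hkl hmn hlt hL
        exact contra p hp
      · have hlt : n < l := by omega
        obtain ⟨p, hp⟩ := collapseL hA' hB' h3' hmn hkl hlt (GreenLM_symm hL)
        exact contra p hp
    · rintro rfl
      exact easyL hA' hB' h3' k l m hkl hmn

end PaperStmt
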